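/- arXiv:2005.07750 — 3 statements merged into one kernel-verified Lean document; each statement's English description precedes it below -/
import Mathlib

section
/- In the Temperley–Lieb algebra TL_3, with w_2 = A^2·1 + (1 − A^{-4})e_1 and w̄_2 = A^{-2}·1 + (1 − A^4)e_1 in TL_2 and ι : TL_2 → TL_3 the R-algebra homomorphism with ι(e_1) = e_1, the following identity holds: A^2·ι(w_2) + ι(w_2)·e_2 − A^{-4}·e_2·ι(w̄_2) = A^4·1 + (A^2 − A^{-6})e_2 + (A^2 − A^{-2})e_1 + (1 − A^{-4})(e_1e_2 + e_2e_1). -/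
/-!
Temperley–Lieb algebra `TL k` over the ring `R = ℤ[A, A⁻¹]` of Laurent polynomials,
with generators `e_1, …, e_{k-1}` and relations
`eᵢ² = δ eᵢ` (with `δ = -A² - A⁻²`), `eᵢ eᵢ₊₁ eᵢ = eᵢ`, `eᵢ₊₁ eᵢ eᵢ₊₁ = eᵢ₊₁`, and
`eᵢ eⱼ = eⱼ eᵢ` for `|i - j| ≥ 2`.
-/

noncomputable section

/-- The ring `R = ℤ[A, A⁻¹]` of Laurent polynomials over `ℤ`. -/
abbrev R : Type := LaurentPolynomial ℤ

/-- `A n` denotes the `n`-th power `Aⁿ` of the distinguished invertible element `A`. -/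
def A (n : ℤ) : R := LaurentPolynomial.T n

/-- `δ = -A² - A⁻²`. -/
def TLδ : R := -A 2 - A (-2)

/-- The Temperley–Lieb relations on the free `R`-algebra on `n` generators `ι 0, …, ι (n-1)`
(where `ι i` corresponds to `e_{i+1}`). -/
inductive TLRel (n : ℕ) : FreeAlgebra R (Fin n) → FreeAlgebra R (Fin n) → Prop
  | sq (i : Fin n) :
      TLRel n (FreeAlgebra.ι R i * FreeAlgebra.ι R i) (TLδ • FreeAlgebra.ι R i)
  | braid_right (i j : Fin n) (h : (i : ℕ) + 1 = (j : ℕ)) :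
      TLRel n (FreeAlgebra.ι R i * FreeAlgebra.ι R j * FreeAlgebra.ι R i) (FreeAlgebra.ι R i)
  | braid_left (i j : Fin n) (h : (i : ℕ) + 1 = (j : ℕ)) :
      TLRel n (FreeAlgebra.ι R j * FreeAlgebra.ι R i * FreeAlgebra.ι R j) (FreeAlgebra.ι R j)
  | comm (i j : Fin n) (h : (i : ℕ) + 2 ≤ (j : ℕ)) :
      TLRel n (FreeAlgebra.ι R i * FreeAlgebra.ι R j) (FreeAlgebra.ι R j * FreeAlgebra.ι R i)

/-- The Temperley–Lieb algebra `TL_k` on `k` strands: the associative unital `R`-algebra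
with generators `e_1, …, e_{k-1}` and the Temperley–Lieb relations. -/
def TL (k : ℕ) : Type := RingQuot (TLRel (k - 1))

instance (k : ℕ) : Ring (TL k) := inferInstanceAs (Ring (RingQuot _))
instance (k : ℕ) : Algebra R (TL k) := inferInstanceAs (Algebra R (RingQuot _))

/-- The generator `e_{i+1}` of `TL k`, for `i : Fin (k-1)`. -/
def e (k : ℕ) (i : Fin (k - 1)) : TL k :=
  RingQuot.mkAlgHom R (TLRel (k - 1)) (FreeAlgebra.ι R i)

lemma e_sq (k : ℕ) (i : Fin (k - 1)) : e k i * e k i = TLδ • e k i := by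
  have h := RingQuot.mkAlgHom_rel R (TLRel.sq (n := k - 1) i)
  simp only [map_mul, map_smul] at h
  exact h

lemma e_braid_right (k : ℕ) (i j : Fin (k - 1)) (h : (i : ℕ) + 1 = (j : ℕ)) :
    e k i * e k j * e k i = e k i := by
  have h' := RingQuot.mkAlgHom_rel R (TLRel.braid_right (n := k - 1) i j h)
  simp only [map_mul] at h'
  exact h'

lemma e_braid_left (k : ℕ) (i j : Fin (k - 1)) (h : (i : ℕ) + 1 = (j : ℕ)) :
    e k j * e k i * e k j = e k j := by
  have h' := RingQuot.mkAlgHom_rel R (TLRel.braid_left (n := k - 1) i j h)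
  simp only [map_mul] at h'
  exact h'

lemma e_comm (k : ℕ) (i j : Fin (k - 1)) (h : (i : ℕ) + 2 ≤ (j : ℕ)) :
    e k i * e k j = e k j * e k i := by
  have h' := RingQuot.mkAlgHom_rel R (TLRel.comm (n := k - 1) i j h)
  simp only [map_mul] at h'
  exact h'

/-- The canonical `R`-algebra homomorphism `TL k →ₐ[R] TL m` (for `k ≤ m`) sending each
generator `e_i` of `TL k` to the generator `e_i` of `TL m`. -/
def TLincl {k m : ℕ} (h : k ≤ m) : TL k →ₐ[R] TL m :=
  RingQuot.liftAlgHom R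
    ⟨FreeAlgebra.lift R (fun i => e m (Fin.castLE (Nat.sub_le_sub_right h 1) i)), by
      intro x y hxy
      induction hxy with
      | sq i => simp [map_mul, map_smul, FreeAlgebra.lift_ι_apply, e_sq]
      | braid_right i j hij =>
          simp only [map_mul, FreeAlgebra.lift_ι_apply]
          exact e_braid_right m _ _ (by simpa using hij)
      | braid_left i j hij =>
          simp only [map_mul, FreeAlgebra.lift_ι_apply]
          exact e_braid_left m _ _ (by simpa using hij)
      | comm i j hij =>
          simp only [map_mul, FreeAlgebra.lift_ι_apply]
          exact e_comm m _ _ (by simpa using hij)⟩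

@[simp] lemma TLincl_e {k m : ℕ} (h : k ≤ m) (i : Fin (k - 1)) :
    TLincl h (e k i) = e m (Fin.castLE (Nat.sub_le_sub_right h 1) i) := by
  rw [TLincl, e]
  erw [RingQuot.liftAlgHom_mkAlgHom_apply]
  rw [FreeAlgebra.lift_ι_apply]

/-! No Temperley–Lieb relation is needed: once `ι e₁ = e₁` is pushed through `w₂` and `w̄₂`,
both sides expand bilinearly into the same combination of `1, e₁, e₂, e₁e₂, e₂e₁`, the
coefficients agreeing by `Aᵐ Aⁿ = Aᵐ⁺ⁿ`. -/

lemma A_add (m n : ℤ) : A (m + n) = A m * A n :=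
  LaurentPolynomial.T_add m n

lemma A_zero : A 0 = 1 :=
  LaurentPolynomial.T_zero

theorem wId3_recursion_in_algebra {S : Type*} [Ring S] [Algebra R S] (x y : S) :
    A 2 • (A 2 • (1 : S) + (1 - A (-4)) • x) + (A 2 • (1 : S) + (1 - A (-4)) • x) * y
        - A (-4) • (y * (A (-2) • (1 : S) + (1 - A 4) • x)) =
      A 4 • (1 : S) + (A 2 - A (-6)) • y + (A 2 - A (-2)) • x
        + (1 - A (-4)) • (x * y + y * x) := by
  have h₄ : A 2 * A 2 = A 4 := (A_add 2 2).symm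
  have h₆ : A (-4) * A (-2) = A (-6) := (A_add (-4) (-2)).symm
  have h₂ : A 2 * A (-4) = A (-2) := (A_add 2 (-4)).symm
  have h₀ : A (-4) * A 4 = 1 := by rw [← A_add, neg_add_cancel, A_zero]
  simp only [smul_add, add_mul, mul_add, smul_mul_assoc, mul_smul_comm, one_mul, mul_one]
  match_scalars <;> simp only [mul_one, mul_sub, neg_sub, h₄, h₆, h₂, h₀]

/-- Equation (3) of the paper: the recursive computation of `w(Id₃)` in the
Temperley–Lieb algebra `TL₃`, where `w₂ = A²·1 + (1 - A⁻⁴)e₁` and `w̄₂ = A⁻²·1 + (1 - A⁴)e₁`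
in `TL₂`, and `ι : TL₂ →ₐ[R] TL₃` is the `R`-algebra homomorphism with `ι e₁ = e₁`. -/
theorem wId3_recursion :
    let e₁' : TL 2 := e 2 ⟨0, by norm_num⟩
    let e₁ : TL 3 := e 3 ⟨0, by norm_num⟩
    let e₂ : TL 3 := e 3 ⟨1, by norm_num⟩
    let ι : TL 2 →ₐ[R] TL 3 := TLincl (by norm_num)
    let w₂ : TL 2 := A 2 • (1 : TL 2) + (1 - A (-4)) • e₁'
    let w₂bar : TL 2 := A (-2) • (1 : TL 2) + (1 - A 4) • e₁'
    A 2 • ι w₂ + ι w₂ * e₂ - A (-4) • (e₂ * ι w₂bar) =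
      A 4 • (1 : TL 3) + (A 2 - A (-6)) • e₂ + (A 2 - A (-2)) • e₁
        + (1 - A (-4)) • (e₁ * e₂ + e₂ * e₁) := by
  intro e₁' e₁ e₂ ι w₂ w₂bar
  have hι : ι e₁' = e₁ := TLincl_e (by norm_num) ⟨0, by norm_num⟩
  simp only [w₂, w₂bar, map_add, map_smul, map_one, hι]
  exact wId3_recursion_in_algebra e₁ e₂

end
end

section
/- In the Temperley–Lieb algebra TL_4, let P_l = (A^{10} − A^6)e_1 + (A^{10} − A^2)e_2 + (A^{10} − A^{-2})e_3 + (A^8 − A^4)(e_2e_1 + e_1e_2) + (A^8 − 1)(e_2e_3 + e_3e_2 + e_1e_3) + (A^6 − A^2)(e_1e_2e_3 + e_1e_3e_2 + e_2e_3e_1 + e_3e_2e_1), P_t = (A^{10} − A^{-2})e_1 + (A^{10} − A^2)e_2 + (A^{10} − A^6)e_3 + (A^8 − A^4)(e_2e_3 + e_3e_2) + (A^8 − 1)(e_2e_1 + e_1e_2 + e_1e_3) + (A^6 − A^2)(e_1e_2e_3 + e_1e_3e_2 + e_2e_3e_1 + e_3e_2e_1), d_1 = (A^8 − 1)e_1 −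 (A^2 − A^6)e_1e_3, and d_2 = (A^8 − 1)e_3 − (A^2 − A^6)e_3e_1. Then the element (P_t − P_l) − (A^4 − 1)(e_2e_1 + e_1e_2 − e_2e_3 − e_3e_2) lies in the R-submodule of TL_4 generated by d_1 and d_2. -/
/-!
Temperley–Lieb algebra `TL k` over the ring `R = ℤ[A, A⁻¹]` of Laurent polynomials,
with generators `e_1, …, e_{k-1}` and relations
`eᵢ² = δ eᵢ` (with `δ = -A² - A⁻²`), `eᵢ eᵢ₊₁ eᵢ = eᵢ`, `eᵢ₊₁ eᵢ eᵢ₊₁ = eᵢ₊₁`, and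
`eᵢ eⱼ = eⱼ eᵢ` for `|i - j| ≥ 2`.
-/

noncomputable section

theorem smul_sub_mem_span_pair_of_commute {S M : Type*} [CommRing S] [Ring M] [Module S M]
    {x y : M} (h : Commute x y) (a b c : S) :
    (c * a) • (x - y) ∈ Submodule.span S {a • x - b • (x * y), a • y - b • (y * x)} :=
  Submodule.mem_span_pair.mpr ⟨c, -c, by rw [h.eq]; module⟩

/-- derivation of Equation (10) of the paper: the element
`(P_t - P_l) - (A⁴-1)(e₂e₁ + e₁e₂ - e₂e₃ - e₃e₂)` lies in the `R`-submodule of `TL₄`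
generated by the sliding relation elements `d₁` and `d₂`. -/
theorem new_relation_derivation :
    let e₁ : TL 4 := e 4 ⟨0, by norm_num⟩
    let e₂ : TL 4 := e 4 ⟨1, by norm_num⟩
    let e₃ : TL 4 := e 4 ⟨2, by norm_num⟩
    let Pl : TL 4 := (A 10 - A 6) • e₁ + (A 10 - A 2) • e₂ + (A 10 - A (-2)) • e₃
        + (A 8 - A 4) • (e₂ * e₁ + e₁ * e₂) + (A 8 - 1) • (e₂ * e₃ + e₃ * e₂ + e₁ * e₃)
        + (A 6 - A 2) • (e₁ * e₂ * e₃ + e₁ * e₃ * e₂ + e₂ * e₃ * e₁ + e₃ * e₂ * e₁)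
    let Pt : TL 4 := (A 10 - A (-2)) • e₁ + (A 10 - A 2) • e₂ + (A 10 - A 6) • e₃
        + (A 8 - A 4) • (e₂ * e₃ + e₃ * e₂) + (A 8 - 1) • (e₂ * e₁ + e₁ * e₂ + e₁ * e₃)
        + (A 6 - A 2) • (e₁ * e₂ * e₃ + e₁ * e₃ * e₂ + e₂ * e₃ * e₁ + e₃ * e₂ * e₁)
    let d₁ : TL 4 := (A 8 - 1) • e₁ - (A 2 - A 6) • (e₁ * e₃)
    let d₂ : TL 4 := (A 8 - 1) • e₃ - (A 2 - A 6) • (e₃ * e₁)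
    (Pt - Pl) - (A 4 - 1) • (e₂ * e₁ + e₁ * e₂ - e₂ * e₃ - e₃ * e₂)
      ∈ Submodule.span R ({d₁, d₂} : Set (TL 4)) := by
  intro e₁ e₂ e₃ Pl Pt d₁ d₂
  -- Only the `e₁`, `e₃` terms survive, and the result is `A⁻²(d₁ - d₂)` since `e₁e₃ = e₃e₁`.
  have hdiff : (Pt - Pl) - (A 4 - 1) • (e₂ * e₁ + e₁ * e₂ - e₂ * e₃ - e₃ * e₂)
      = (A 6 - A (-2)) • (e₁ - e₃) := by
    simp only [Pl, Pt]
    module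
  have hcoeff : A 6 - A (-2) = A (-2) * (A 8 - 1) := by
    simp only [A, mul_sub, mul_one, ← LaurentPolynomial.T_add]
    norm_num
  rw [hdiff, hcoeff]
  exact smul_sub_mem_span_pair_of_commute (e_comm 4 ⟨0, by norm_num⟩ ⟨2, by norm_num⟩ le_rfl) _ _ _

end
end

section
/- The Temperley–Lieb algebra TL_4 over R = ℤ[A, A^{-1}] is a free R-module of rank 14, with basis given by the fourteen elements 1, e_1, e_2, e_3, e_1e_3, e_1e_2, e_2e_1, e_2e_3, e_3e_2, e_1e_2e_3, e_3e_2e_1, e_1e_3e_2, e_2e_3e_1, e_2e_1e_3e_2. -/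
/-!
Temperley–Lieb algebra `TL k` over the ring `R = ℤ[A, A⁻¹]` of Laurent polynomials,
with generators `e_1, …, e_{k-1}` and relations
`eᵢ² = δ eᵢ` (with `δ = -A² - A⁻²`), `eᵢ eᵢ₊₁ eᵢ = eᵢ`, `eᵢ₊₁ eᵢ eᵢ₊₁ = eᵢ₊₁`, and
`eᵢ eⱼ = eⱼ eᵢ` for `|i - j| ≥ 2`.
-/

noncomputable section

/-!
The fourteen monomials span `TL₄`: the relations turn each product `eᵢ · m` of a generator with a
monomial into `δⁿ` times a monomial, so their span is stable under left multiplication and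
contains `1`. They are independent because these multiplication rules, read as monomial
`14 × 14` matrices, satisfy the Temperley–Lieb relations themselves (a finite check); the
resulting representation of `TL₄` on `R¹⁴` maps the `l`-th monomial to an endomorphism sending
the first basis vector to the `l`-th one.
-/

section Relations

variable {k : ℕ} (x : TL k)

lemma mul_e_mul_e_self (i : Fin (k - 1)) : x * e k i * e k i = TLδ • (x * e k i) := by
  rw [mul_assoc, e_sq, mul_smul_comm]

lemma mul_e_braid_right {i j : Fin (k - 1)} (h : (i : ℕ) + 1 = j) :
    x * e k i * e k j * e k i = x * e k i := by
  rw [mul_assoc, mul_assoc, ← mul_assoc (e k i), e_braid_right k i j h]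

lemma mul_e_braid_left {i j : Fin (k - 1)} (h : (i : ℕ) + 1 = j) :
    x * e k j * e k i * e k j = x * e k j := by
  rw [mul_assoc, mul_assoc, ← mul_assoc (e k j), e_braid_left k i j h]

end Relations

namespace TL

variable {k : ℕ} {B : Type*} [Semiring B] [Algebra R B] (g : Fin (k - 1) → B)
  (hsq : ∀ i, g i * g i = TLδ • g i)
  (hbr : ∀ i j : Fin (k - 1), (i : ℕ) + 1 = j → g i * g j * g i = g i)
  (hbl : ∀ i j : Fin (k - 1), (i : ℕ) + 1 = j → g j * g i * g j = g j)
  (hcomm : ∀ i j : Fin (k - 1), (i : ℕ) + 2 ≤ j → g i * g j = g j * g i)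

def lift : TL k →ₐ[R] B :=
  RingQuot.liftAlgHom R ⟨FreeAlgebra.lift R g, fun x y hxy => by
    induction hxy with
    | sq i => simpa using hsq i
    | braid_right i j h => simpa using hbr i j h
    | braid_left i j h => simpa using hbl i j h
    | comm i j h => simpa using hcomm i j h⟩

lemma lift_e (i : Fin (k - 1)) : lift g hsq hbr hbl hcomm (e k i) = g i := by
  rw [lift, e]
  erw [RingQuot.liftAlgHom_mkAlgHom_apply]
  rw [FreeAlgebra.lift_ι_apply]

lemma adjoin_range_e : Algebra.adjoin R (Set.range (e k)) = ⊤ := by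
  let π : FreeAlgebra R (Fin (k - 1)) →ₐ[R] TL k := RingQuot.mkAlgHom R (TLRel (k - 1))
  have hrange : Set.range (e k) = π '' Set.range (FreeAlgebra.ι R) := Set.range_comp _ _
  rw [hrange, Algebra.adjoin_image, FreeAlgebra.adjoin_range_ι, Algebra.map_top,
    AlgHom.range_eq_top]
  exact RingQuot.mkAlgHom_surjective R _

end TL

lemma Submodule.span_range_eq_top_of_mul_mem {S B ι κ : Type*} [CommSemiring S] [Semiring B]
    [Algebra S B] {g : ι → B} (hg : Algebra.adjoin S (Set.range g) = ⊤) {b : κ → B}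
    (h1 : 1 ∈ span S (Set.range b)) (hmul : ∀ i l, g i * b l ∈ span S (Set.range b)) :
    span S (Set.range b) = ⊤ := by
  set M := span S (Set.range b)
  have hgen : ∀ i, M ≤ M.comap (LinearMap.mulLeft S (g i)) := fun i =>
    span_le.2 <| Set.range_subset_iff.2 (hmul i)
  have hadj : ∀ x ∈ Algebra.adjoin S (Set.range g), ∀ y ∈ M, x * y ∈ M := by
    intro x hx
    induction hx using Algebra.adjoin_induction with
    | mem x hx => obtain ⟨i, rfl⟩ := hx; exact fun y hy => hgen i hy
    | algebraMap r => intro y hy; rw [← Algebra.smul_def]; exact M.smul_mem r hy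
    | add x x' _ _ hx hx' => intro y hy; rw [add_mul]; exact M.add_mem (hx y hy) (hx' y hy)
    | mul x x' _ _ hx hx' => intro y hy; rw [mul_assoc]; exact hx _ (hx' y hy)
  refine eq_top_iff.2 fun x _ => ?_
  simpa using hadj x (hg ▸ Algebra.mem_top) 1 h1

section MonomialAction

variable {ι κ : Type*}

/-- `act i l = (j, n)` says that generator `i` sends the `l`-th basis vector to `δ ^ n` times the
`j`-th one; `monomialWalk act w l` is the same datum for the word `w`, acting right to left. -/
def monomialWalk (act : ι → κ → κ × ℕ) : List ι → κ → κ × ℕ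
  | [], l => (l, 0)
  | i :: w, l =>
    let p := monomialWalk act w l
    ((act i p.1).1, p.2 + (act i p.1).2)

variable {S : Type*} [CommSemiring S] (δ : S)

def monomialEnd (f : κ → κ × ℕ) : Module.End S (κ →₀ S) :=
  Finsupp.linearCombination S fun l => δ ^ (f l).2 • Finsupp.single (f l).1 1

lemma monomialEnd_list_prod_single (act : ι → κ → κ × ℕ) (w : List ι) (l : κ) :
    (w.map fun i => monomialEnd δ (act i)).prod (Finsupp.single l 1) =
      δ ^ (monomialWalk act w l).2 • Finsupp.single (monomialWalk act w l).1 1 := by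
  induction w with
  | nil => simp [monomialWalk]
  | cons i w ih =>
    rw [List.map_cons, List.prod_cons, Module.End.mul_apply, ih, map_smul, monomialEnd,
      Finsupp.linearCombination_single, one_smul, smul_smul, ← pow_add]
    rfl

lemma monomialEnd_list_prod_eq {act : ι → κ → κ × ℕ} {w w' : List ι} {n : ℕ}
    (h : ∀ l, monomialWalk act w l = ((monomialWalk act w' l).1, (monomialWalk act w' l).2 + n)) :
    (w.map fun i => monomialEnd δ (act i)).prod =
      δ ^ n • (w'.map fun i => monomialEnd δ (act i)).prod := by
  ext l : 2
  simp [monomialEnd_list_prod_single, h, pow_add, mul_comm]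

lemma monomialEnd_list_prod_congr {act : ι → κ → κ × ℕ} {w w' : List ι}
    (h : monomialWalk act w = monomialWalk act w') :
    (w.map fun i => monomialEnd δ (act i)).prod =
      (w'.map fun i => monomialEnd δ (act i)).prod := by
  simpa using monomialEnd_list_prod_eq δ (act := act) (w := w) (w' := w') (n := 0) (by simp [h])

end MonomialAction

namespace TL4

local notation "e₁" => e 4 0
local notation "e₂" => e 4 1
local notation "e₃" => e 4 2

def monomial : Fin 14 → TL 4 :=
  ![1, e₁, e₂, e₃, e₁ * e₃, e₁ * e₂, e₂ * e₁, e₂ * e₃, e₃ * e₂,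
    e₁ * e₂ * e₃, e₃ * e₂ * e₁, e₁ * e₃ * e₂, e₂ * e₃ * e₁, e₂ * e₁ * e₃ * e₂]

def word : Fin 14 → List (Fin 3) :=
  ![[], [0], [1], [2], [0, 2], [0, 1], [1, 0], [1, 2], [2, 1],
    [0, 1, 2], [2, 1, 0], [0, 2, 1], [1, 2, 0], [1, 0, 2, 1]]

def act : Fin 3 → Fin 14 → Fin 14 × ℕ :=
  ![![(1, 0), (1, 1), (5, 0), (4, 0), (4, 1), (5, 1), (1, 0), (9, 0), (11, 0), (9, 1), (4, 0),
      (11, 1), (4, 0), (11, 0)],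
    ![(2, 0), (6, 0), (2, 1), (7, 0), (12, 0), (2, 0), (6, 1), (7, 1), (2, 0), (7, 0), (6, 0),
      (13, 0), (12, 1), (13, 1)],
    ![(3, 0), (4, 0), (8, 0), (3, 1), (4, 1), (11, 0), (10, 0), (3, 0), (8, 1), (4, 0), (10, 1),
      (11, 1), (4, 0), (11, 0)]]

lemma monomial_eq_prod (l : Fin 14) : monomial l = ((word l).map (e 4)).prod := by
  fin_cases l <;> simp [monomial, word, mul_assoc]

lemma e₃_mul_e₁ : e₃ * e₁ = e₁ * e₃ := (e_comm 4 0 2 (by decide)).symm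

lemma mul_e₃_mul_e₁ (x : TL 4) : x * e₃ * e₁ = x * e₁ * e₃ := by
  rw [mul_assoc, e₃_mul_e₁, mul_assoc]

lemma e₁_mul_e₃_mul_e₂_mul_e₁ : e₁ * e₃ * e₂ * e₁ = e₁ * e₃ := by
  rw [← e₃_mul_e₁, mul_e_braid_right _ (by decide), e₃_mul_e₁]

lemma e₃_mul_e₂_mul_e₁_mul_e₃ : e₃ * e₂ * e₁ * e₃ = e₁ * e₃ := by
  rw [mul_assoc _ e₁, ← e₃_mul_e₁, ← mul_assoc, e_braid_left 4 1 2 rfl, e₃_mul_e₁]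

/- `simp` normalises both sides with the relations in left-associated form, oriented
`e₃ e₁ ↦ e₁ e₃`; the two lemmas above are the extra rules this rewriting system needs to reach
normal forms here. -/
lemma e_mul_monomial (i : Fin 3) (l : Fin 14) :
    e 4 i * monomial l = TLδ ^ (act i l).2 • monomial (act i l).1 := by
  fin_cases i <;> fin_cases l <;>
    simp [monomial, act, ← mul_assoc, e_sq, e_braid_right, e_braid_left,
      mul_e_mul_e_self, mul_e_braid_left, e₃_mul_e₁, mul_e₃_mul_e₁, e₁_mul_e₃_mul_e₂_mul_e₁,
      e₃_mul_e₂_mul_e₁_mul_e₃]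

lemma walk_sq : ∀ (i : Fin 3) (l : Fin 14), monomialWalk act [i, i] l =
    ((monomialWalk act [i] l).1, (monomialWalk act [i] l).2 + 1) := by
  decide

lemma walk_braid_right :
    ∀ i j : Fin 3, (i : ℕ) + 1 = j → monomialWalk act [i, j, i] = monomialWalk act [i] := by
  decide

lemma walk_braid_left :
    ∀ i j : Fin 3, (i : ℕ) + 1 = j → monomialWalk act [j, i, j] = monomialWalk act [j] := by
  decide

lemma walk_comm :
    ∀ i j : Fin 3, (i : ℕ) + 2 ≤ j → monomialWalk act [i, j] = monomialWalk act [j, i] := by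
  decide

lemma walk_word : ∀ l : Fin 14, monomialWalk act (word l) 0 = (l, 0) := by
  decide

def rep : TL 4 →ₐ[R] Module.End R (Fin 14 →₀ R) :=
  TL.lift (fun i => monomialEnd TLδ (act i))
    (fun i => by simpa using monomialEnd_list_prod_eq TLδ (walk_sq i))
    (fun i j h => by
      simpa [mul_assoc] using monomialEnd_list_prod_congr TLδ (walk_braid_right i j h))
    (fun i j h => by
      simpa [mul_assoc] using monomialEnd_list_prod_congr TLδ (walk_braid_left i j h))
    (fun i j h => by simpa using monomialEnd_list_prod_congr TLδ (walk_comm i j h))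

lemma rep_e (i : Fin 3) : rep (e 4 i) = monomialEnd TLδ (act i) := TL.lift_e ..

lemma rep_monomial_single_zero (l : Fin 14) :
    rep (monomial l) (Finsupp.single 0 1) = Finsupp.single l 1 := by
  rw [monomial_eq_prod, map_list_prod, List.map_map, Function.comp_def]
  simp only [rep_e]
  simpa [walk_word] using monomialEnd_list_prod_single TLδ act (word l) 0

lemma linearIndependent_monomial : LinearIndependent R monomial := by
  let ψ : TL 4 →ₗ[R] Fin 14 →₀ R := LinearMap.applyₗ (Finsupp.single 0 1) ∘ₗ rep.toLinearMap
  refine LinearIndependent.of_comp ψ ?_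
  convert Finsupp.linearIndependent_single_one R (Fin 14)
  exact rep_monomial_single_zero _

lemma span_monomial : Submodule.span R (Set.range monomial) = ⊤ := by
  refine Submodule.span_range_eq_top_of_mul_mem TL.adjoin_range_e
    (Submodule.subset_span ⟨0, rfl⟩) fun i l => ?_
  rw [e_mul_monomial]
  exact Submodule.smul_mem _ _ (Submodule.subset_span ⟨_, rfl⟩)

end TL4

/-- `TL₄` is a free `R`-module of rank `14`, with basis the fourteen
elements `1, e₁, e₂, e₃, e₁e₃, e₁e₂, e₂e₁, e₂e₃, e₃e₂, e₁e₂e₃, e₃e₂e₁, e₁e₃e₂, e₂e₃e₁,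
e₂e₁e₃e₂`. -/
theorem TL4_free_of_rank_14 :
    let e₁ : TL 4 := e 4 ⟨0, by norm_num⟩
    let e₂ : TL 4 := e 4 ⟨1, by norm_num⟩
    let e₃ : TL 4 := e 4 ⟨2, by norm_num⟩
    ∃ b : Module.Basis (Fin 14) R (TL 4),
      ⇑b = ![1, e₁, e₂, e₃, e₁ * e₃, e₁ * e₂, e₂ * e₁, e₂ * e₃, e₃ * e₂,
        e₁ * e₂ * e₃, e₃ * e₂ * e₁, e₁ * e₃ * e₂, e₂ * e₃ * e₁, e₂ * e₁ * e₃ * e₂] := by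
  intro e₁ e₂ e₃
  exact ⟨.mk TL4.linearIndependent_monomial TL4.span_monomial.ge, Module.Basis.coe_mk _ _⟩

end
end
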